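/- Fix α = (α₁, α₂) ∈ ℝ², β = (β₁, β₂) ∈ ℝ², α₃, β₃ ∈ ℝ. Suppose there is a constant C > 0 with α = C·β, and suppose α₃·β₃ < 0. Then the Fourier symbol matrix is invertible for every frequency: det M̂(ξ) ≠ 0 for all ξ ∈ ℝ². (Here det M̂(ξ) = ‖ξ‖⁴ − (i(α·ξ) + α₃)(i(β·ξ) + β₃).) -/

import Mathlib

open MeasureTheory Real Set
open scoped RealInnerProductSpace

/-- The Fourier symbol matrix `M̂(ξ)` of the coupled strongly elliptic system. -/
noncomputable def symbolMatrix (α β : EuclideanSpace ℝ (Fin 2)) (α₃ β₃ : ℝ)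
    (ξ : EuclideanSpace ℝ (Fin 2)) : Matrix (Fin 2) (Fin 2) ℂ :=
  !![((‖ξ‖ ^ 2 : ℝ) : ℂ), Complex.I * ((⟪α, ξ⟫ : ℝ) : ℂ) + (α₃ : ℂ);
     Complex.I * ((⟪β, ξ⟫ : ℝ) : ℂ) + (β₃ : ℂ), ((‖ξ‖ ^ 2 : ℝ) : ℂ)]

/-- If `α = C·β` for some `C > 0` and `α₃·β₃ < 0`, then the symbol matrix is invertible at
every frequency. -/
theorem symbolMatrix_det_ne_zero
    (α β : EuclideanSpace ℝ (Fin 2)) (α₃ β₃ : ℝ)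
    (hC : ∃ C : ℝ, 0 < C ∧ α = C • β) (h₃ : α₃ * β₃ < 0) :
    ∀ ξ : EuclideanSpace ℝ (Fin 2), (symbolMatrix α β α₃ β₃ ξ).det ≠ 0 := by
  obtain ⟨C, hCpos, rfl⟩ := hC
  intro ξ h
  have hre := congrArg Complex.re h
  simp [symbolMatrix, Matrix.det_fin_two_of, Complex.add_re, Complex.mul_re,
    real_inner_smul_left, Complex.ofReal_re, Complex.ofReal_im, ← Complex.ofReal_pow] at hre
  nlinarith [mul_nonneg hCpos.le (sq_nonneg ⟪β, ξ⟫), sq_nonneg (‖ξ‖ ^ 2)]
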